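/- Let T_1,...,T_m (m ≥ 2) be pairwise vertex-disjoint trees, where T_i has a distinguished root w_i, and let T be the tree obtained by adding a new vertex w joined by an edge to each of w_1,...,w_m. Assume that for each i, either T_i consists of the single vertex w_i, or w_i has degree at least 2 in T_i. Let l_i be the number of pendent vertices of T_i, let l = l_1 + ... + l_m, and let d'_{T_i}(w_i) be the sum of the distances in T_i from w_i to all pendent vertices of T_i. Then TW(T) = Σ_{i=1}^m [ TW(T_i) + (l - l_i)·d'_{T_i}(w_i) - l_i² ] + l². -/

import Mathlib

open Finset

/-- The pendent vertices of a graph on a finite vertex type: the vertices of degree at most 1.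
For a tree this is the set of vertices of degree 1, except that a one-vertex tree has its
unique vertex as its unique pendent vertex. -/
noncomputable def pendentFinset {V : Type*} [Fintype V] (G : SimpleGraph V) : Finset V := by
  classical exact univ.filter (fun v => G.degree v ≤ 1)

/-- The terminal Wiener index of a graph: the sum of the distances over all unordered pairs of
pendent vertices, i.e. half of the sum over all ordered pairs of pendent vertices. -/
noncomputable def terminalWienerIndex {V : Type*} [Fintype V] (G : SimpleGraph V) : ℕ :=
  (∑ u ∈ pendentFinset G, ∑ v ∈ pendentFinset G, G.dist u v) / 2

/-- `d'_G(w)`: the sum of the distances in `G` between `w` and all pendent vertices of `G`. -/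
noncomputable def pendentDistSum {V : Type*} [Fintype V] (G : SimpleGraph V) (w : V) : ℕ :=
  ∑ v ∈ pendentFinset G, G.dist w v

/-- The tree obtained from pairwise vertex-disjoint rooted trees `T i` (with root `w i`) by
adding a new vertex `none` joined by an edge to each of the roots `w i`. -/
def joinTrees {ι : Type*} {V : ι → Type*} (T : ∀ i, SimpleGraph (V i)) (w : ∀ i, V i) :
    SimpleGraph (Option (Σ i, V i)) :=
  SimpleGraph.fromRel (fun x y =>
    (∃ i : ι, x = none ∧ y = some ⟨i, w i⟩) ∨
    (∃ (i : ι) (a b : V i), x = some ⟨i, a⟩ ∧ y = some ⟨i, b⟩ ∧ (T i).Adj a b))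


/-! Distances in the joined tree are read off component by component. Inside one `T i` they are
the distances of `T i`: projecting onto `T i`, i.e. collapsing everything outside it to the root
`w i`, shortens no walk. Between different components every walk crosses from `T i` to the new
vertex through `w i`, so `d(a, b) = d(w i, a) + d(w j, b) + 2`. As no root is a leaf of its tree
and the new vertex has degree `m ≥ 2`, the pendent vertices of the join are exactly those of the
`T i`. Summing over ordered pairs of them, the pairs inside `T i` give `2 TW(T i)` and the pairs
across `T i` and `T j` give `l j d'(w i) + l i d'(w j) + 2 l i l j`; summing over `i ≠ j`
yields the formula. -/

namespace SimpleGraph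

variable {V W : Type*} {G : SimpleGraph V} {H : SimpleGraph W}

lemma Walk.exists_length_le_of_adj_imp (f : V → W)
    (hf : ∀ ⦃x y⦄, G.Adj x y → f x = f y ∨ H.Adj (f x) (f y)) {u v : V} (p : G.Walk u v) :
    ∃ q : H.Walk (f u) (f v), q.length ≤ p.length := by
  induction p with
  | nil => exact ⟨.nil, le_rfl⟩
  | cons h p ih =>
    obtain ⟨q, hq⟩ := ih
    rcases hf h with heq | hadj
    · exact ⟨q.copy heq.symm rfl, by simp; omega⟩
    · exact ⟨.cons hadj q, by simpa using hq⟩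

lemma Reachable.dist_le_of_adj_imp (f : V → W)
    (hf : ∀ ⦃x y⦄, G.Adj x y → f x = f y ∨ H.Adj (f x) (f y)) {u v : V} (h : G.Reachable u v) :
    H.dist (f u) (f v) ≤ G.dist u v := by
  obtain ⟨p, hp⟩ := h.exists_walk_length_eq_dist
  obtain ⟨q, hq⟩ := p.exists_length_le_of_adj_imp f hf
  exact hp ▸ (dist_le q).trans hq

lemma Reachable.dist_map_le (f : G →g H) {u v : V} (h : G.Reachable u v) :
    H.dist (f u) (f v) ≤ G.dist u v :=
  h.dist_le_of_adj_imp f fun _ _ hxy => .inr (f.map_adj hxy)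

lemma Reachable.dist_eq_add_of_forall_mem_support {u v x : V} (h : G.Reachable u v)
    (hx : ∀ p : G.Walk u v, x ∈ p.support) : G.dist u v = G.dist u x + G.dist x v := by
  classical
  obtain ⟨p, hp⟩ := h.exists_walk_length_eq_dist
  have hmem := hx p
  refine le_antisymm ((p.dropUntil x hmem).reachable.dist_triangle_right u) ?_
  calc G.dist u x + G.dist x v
      ≤ (p.takeUntil x hmem).length + (p.dropUntil x hmem).length :=
        add_le_add (dist_le _) (dist_le _)
    _ = G.dist u v := by rw [← Walk.length_append, Walk.take_spec, hp]

lemma degree_eq_ncard_neighborSet (v : V) [Fintype (G.neighborSet v)] :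
    G.degree v = (G.neighborSet v).ncard := by
  rw [← card_neighborSet_eq_degree, Set.ncard_eq_toFinset_card', Set.toFinset_card]

end SimpleGraph

lemma mem_pendentFinset {V : Type*} [Fintype V] {G : SimpleGraph V} {v : V} :
    v ∈ pendentFinset G ↔ (G.neighborSet v).ncard ≤ 1 := by
  simp [pendentFinset, SimpleGraph.degree_eq_ncard_neighborSet]

lemma even_sum_sum_of_symm {α : Type*} (s : Finset α) (f : α → α → ℕ)
    (hsymm : ∀ u v, f u v = f v u) (hdiag : ∀ u, f u u = 0) :
    Even (∑ u ∈ s, ∑ v ∈ s, f u v) := by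
  classical
  induction s using Finset.induction_on with
  | empty => simp
  | insert a s ha ih =>
    simp only [sum_insert ha, hdiag, zero_add, sum_add_distrib, hsymm _ a]
    rw [← add_assoc, ← two_mul]
    exact (even_two_mul _).add ih

lemma two_mul_terminalWienerIndex {V : Type*} [Fintype V] (G : SimpleGraph V) :
    2 * terminalWienerIndex G = ∑ u ∈ pendentFinset G, ∑ v ∈ pendentFinset G, G.dist u v :=
  Nat.two_mul_div_two_of_even <|
    even_sum_sum_of_symm _ _ (fun _ _ => G.dist_comm) (fun _ => G.dist_self)

lemma sum_sum_erase_cross_terms {ι R : Type*} [Fintype ι] [DecidableEq ι] [CommRing R]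
    (l D : ι → R) :
    ∑ i, ∑ j ∈ univ.erase i, (l j * D i + l i * D j + 2 * l i * l j) =
      2 * ∑ i, ((∑ j, l j) - l i) * D i + 2 * ((∑ j, l j) ^ 2 - ∑ i, l i ^ 2) := by
  simp only [sum_add_distrib, ← sum_mul, ← mul_sum, sum_erase_eq_sub (mem_univ _), sub_mul,
    mul_sub, sum_sub_distrib, sq, mul_assoc]
  ring

namespace joinTrees

variable {ι : Type*} {V : ι → Type*} (T : ∀ i, SimpleGraph (V i)) (w : ∀ i, V i)

lemma adj_none {y : Option (Σ i, V i)} :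
    (joinTrees T w).Adj none y ↔ ∃ i, y = some ⟨i, w i⟩ := by
  simp +contextual [joinTrees, eq_comm]

lemma adj_some {i : ι} {a : V i} {y : Option (Σ i, V i)} :
    (joinTrees T w).Adj (some ⟨i, a⟩) y ↔
      (a = w i ∧ y = none) ∨ ∃ b, (T i).Adj a b ∧ y = some ⟨i, b⟩ := by
  simp only [joinTrees, SimpleGraph.fromRel_adj]
  constructor
  · rintro ⟨-, (⟨k, ⟨⟩, -⟩ | ⟨k, c, d, ⟨⟩, rfl, hcd⟩) | (⟨k, rfl, ⟨⟩⟩ | ⟨k, c, d, rfl, ⟨⟩, hcd⟩)⟩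
    · exact .inr ⟨d, hcd, rfl⟩
    · exact .inl ⟨rfl, rfl⟩
    · exact .inr ⟨c, hcd.symm, rfl⟩
  · rintro (⟨rfl, rfl⟩ | ⟨b, hab, rfl⟩)
    · exact ⟨by simp, .inr (.inl ⟨i, rfl, rfl⟩)⟩
    · exact ⟨by simp [hab.ne], .inl (.inr ⟨i, a, b, rfl, rfl, hab⟩)⟩

def inclusion (i : ι) : T i →g joinTrees T w where
  toFun a := some ⟨i, a⟩
  map_rel' hab := (adj_some T w).2 (.inr ⟨_, hab, rfl⟩)

@[simp] lemma inclusion_apply (i : ι) (a : V i) : inclusion T w i a = some ⟨i, a⟩ := rfl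

open scoped Classical in
noncomputable def proj (i : ι) : Option (Σ j, V j) → V i
  | some ⟨j, a⟩ => if h : j = i then h ▸ a else w i
  | none => w i

@[simp] lemma proj_none (i : ι) : proj w i none = w i := rfl

@[simp] lemma proj_some_self (i : ι) (a : V i) : proj w i (some ⟨i, a⟩) = a := by
  simp [proj]

lemma proj_some_of_ne {i j : ι} (h : j ≠ i) (a : V j) :
    proj w i (some ⟨j, a⟩) = w i := by
  simp [proj, h]

lemma proj_adj (i : ι) {x y : Option (Σ j, V j)} (h : (joinTrees T w).Adj x y) :
    proj w i x = proj w i y ∨ (T i).Adj (proj w i x) (proj w i y) := by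
  rcases x with _ | ⟨j, a⟩
  · obtain ⟨j, rfl⟩ := (adj_none T w).1 h
    left
    obtain rfl | hji := eq_or_ne j i
    · simp
    · simp [proj_some_of_ne w hji]
  · obtain rfl | hji := eq_or_ne j i
    · rcases (adj_some T w).1 h with ⟨rfl, rfl⟩ | ⟨b, hab, rfl⟩
      · simp
      · exact .inr (by simpa using hab)
    · left
      rcases (adj_some T w).1 h with ⟨-, rfl⟩ | ⟨b, -, rfl⟩ <;>
        simp [proj_some_of_ne w hji]

lemma root_mem_support_and_none_mem_support {i : ι} {a : V i} {y : Option (Σ j, V j)}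
    (p : (joinTrees T w).Walk (some ⟨i, a⟩) y) (hy : ∀ b, y ≠ some ⟨i, b⟩) :
    some ⟨i, w i⟩ ∈ p.support ∧ none ∈ p.support := by
  obtain ⟨d, hd, ⟨c, hc⟩, hout⟩ := p.exists_boundary_dart
    (Set.range fun b => some ⟨i, b⟩) ⟨a, rfl⟩ (by simpa [eq_comm] using hy)
  have hfst := p.dart_fst_mem_support_of_mem_darts hd
  have hsnd := p.dart_snd_mem_support_of_mem_darts hd
  have hadj := d.adj
  rw [← hc, adj_some] at hadj
  rcases hadj with ⟨rfl, hnone⟩ | ⟨b, -, hb⟩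
  · exact ⟨by rwa [← hc] at hfst, hnone ▸ hsnd⟩
  · exact absurd ⟨b, hb.symm⟩ hout

lemma dist_some_some {i : ι} {a b : V i} (h : (T i).Reachable a b) :
    (joinTrees T w).dist (some ⟨i, a⟩) (some ⟨i, b⟩) = (T i).dist a b := by
  have hJ := h.map (inclusion T w i)
  refine le_antisymm (h.dist_map_le (inclusion T w i)) ?_
  simpa using hJ.dist_le_of_adj_imp (proj w i) fun _ _ => proj_adj T w i

lemma dist_none_some {i : ι} {a : V i} (h : (T i).Reachable (w i) a) :
    (joinTrees T w).dist none (some ⟨i, a⟩) = (T i).dist (w i) a + 1 := by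
  have hroot : (joinTrees T w).Adj none (some ⟨i, w i⟩) := (adj_none T w).2 ⟨i, rfl⟩
  have hJ : (joinTrees T w).Reachable none (some ⟨i, a⟩) :=
    hroot.reachable.trans (h.map (inclusion T w i))
  rw [hJ.dist_eq_add_of_forall_mem_support (x := some ⟨i, w i⟩), dist_some_some T w h,
    SimpleGraph.dist_eq_one_iff_adj.2 hroot, add_comm]
  intro p
  simpa using (root_mem_support_and_none_mem_support T w p.reverse (by simp)).1

lemma dist_some_some_of_ne {i j : ι} (hij : i ≠ j) {a : V i} {b : V j}
    (ha : (T i).Reachable (w i) a) (hb : (T j).Reachable (w j) b) :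
    (joinTrees T w).dist (some ⟨i, a⟩) (some ⟨j, b⟩) =
      (T i).dist (w i) a + (T j).dist (w j) b + 2 := by
  have hJ : (joinTrees T w).Reachable (some ⟨i, a⟩) (some ⟨j, b⟩) :=
    (ha.map (inclusion T w i)).symm.trans <|
      ((adj_some T w).2 (.inl ⟨rfl, rfl⟩)).reachable.trans <|
        ((adj_none T w).2 ⟨j, rfl⟩).reachable.trans (hb.map (inclusion T w j))
  rw [hJ.dist_eq_add_of_forall_mem_support (x := none), SimpleGraph.dist_comm,
    dist_none_some T w ha, dist_none_some T w hb]
  · ring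
  · intro p
    exact (root_mem_support_and_none_mem_support T w p (by simp [hij.symm])).2

lemma neighborSet_none :
    (joinTrees T w).neighborSet none = Set.range fun i => some ⟨i, w i⟩ := by
  ext y
  simp [adj_none, eq_comm]

lemma neighborSet_some (i : ι) (a : V i) :
    (joinTrees T w).neighborSet (some ⟨i, a⟩) =
      {y | a = w i ∧ y = none} ∪ (fun b => some ⟨i, b⟩) '' (T i).neighborSet a := by
  ext y
  simp [adj_some, eq_comm]

lemma ncard_neighborSet_none [Finite ι] :
    ((joinTrees T w).neighborSet none).ncard = Nat.card ι := by
  rw [neighborSet_none, Set.ncard_range_of_injective]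
  intro i j h
  exact congr_arg Sigma.fst (Option.some_injective _ h)

open scoped Classical in
lemma ncard_neighborSet_some [∀ i, Finite (V i)] (i : ι) (a : V i) :
    ((joinTrees T w).neighborSet (some ⟨i, a⟩)).ncard =
      ((T i).neighborSet a).ncard + if a = w i then 1 else 0 := by
  have hinj : Function.Injective fun b : V i => (some ⟨i, b⟩ : Option (Σ j, V j)) :=
    (Option.some_injective _).comp sigma_mk_injective
  rw [neighborSet_some]
  by_cases h : a = w i
  · have hnone : {y : Option (Σ j, V j) | a = w i ∧ y = none} = {none} := by ext; simp [h]
    rw [hnone, if_pos h, Set.singleton_union, Set.ncard_insert_of_notMem (by simp),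
      Set.ncard_image_of_injective _ hinj]
  · have hnone : {y : Option (Σ j, V j) | a = w i ∧ y = none} = ∅ := by ext; simp [h]
    rw [hnone, if_neg h, Set.empty_union, Set.ncard_image_of_injective _ hinj, add_zero]

lemma pendentFinset_eq [Fintype ι] [∀ i, Fintype (V i)] (hm : 2 ≤ Fintype.card ι)
    (hroot : ∀ i, ((T i).neighborSet (w i)).ncard ≠ 1) :
    pendentFinset (joinTrees T w) =
      (univ.sigma fun i => pendentFinset (T i)).map Function.Embedding.some := by
  ext x
  rcases x with _ | ⟨i, a⟩
  · simp [mem_pendentFinset, ncard_neighborSet_none, Nat.card_eq_fintype_card]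
    omega
  · rw [mem_pendentFinset, ncard_neighborSet_some,
      show (some ⟨i, a⟩ : Option (Σ j, V j)) = Function.Embedding.some ⟨i, a⟩ from rfl,
      mem_map', mem_sigma, mem_pendentFinset]
    split_ifs with h
    · subst h
      have := hroot i
      simp only [mem_univ, true_and]
      omega
    · simp

lemma sum_sum_dist_self [∀ i, Fintype (V i)] {i : ι} (hi : (T i).Connected) :
    ∑ a ∈ pendentFinset (T i), ∑ b ∈ pendentFinset (T i),
      (joinTrees T w).dist (some ⟨i, a⟩) (some ⟨i, b⟩) = 2 * terminalWienerIndex (T i) := by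
  rw [two_mul_terminalWienerIndex]
  exact sum_congr rfl fun a _ => sum_congr rfl fun b _ =>
    dist_some_some T w (hi.preconnected a b)

lemma sum_sum_dist_of_ne [∀ i, Fintype (V i)] {i j : ι} (hij : i ≠ j)
    (hi : (T i).Connected) (hj : (T j).Connected) :
    ∑ a ∈ pendentFinset (T i), ∑ b ∈ pendentFinset (T j),
      (joinTrees T w).dist (some ⟨i, a⟩) (some ⟨j, b⟩) =
      #(pendentFinset (T j)) * pendentDistSum (T i) (w i) +
        #(pendentFinset (T i)) * pendentDistSum (T j) (w j) +
        2 * #(pendentFinset (T i)) * #(pendentFinset (T j)) := by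
  calc _ = ∑ a ∈ pendentFinset (T i), ∑ b ∈ pendentFinset (T j),
        ((T i).dist (w i) a + (T j).dist (w j) b + 2) :=
        sum_congr rfl fun a _ => sum_congr rfl fun b _ =>
          dist_some_some_of_ne T w hij (hi.preconnected _ a) (hj.preconnected _ b)
    _ = _ := by
      simp only [sum_add_distrib, sum_const, smul_eq_mul, pendentDistSum, mul_sum]
      ring

lemma two_mul_terminalWienerIndex_eq [Fintype ι] [DecidableEq ι] [∀ i, Fintype (V i)]
    (hc : ∀ i, (T i).Connected) (hm : 2 ≤ Fintype.card ι)
    (hroot : ∀ i, ((T i).neighborSet (w i)).ncard ≠ 1) :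
    2 * terminalWienerIndex (joinTrees T w) =
      ∑ i, (2 * terminalWienerIndex (T i) + ∑ j ∈ univ.erase i,
        (#(pendentFinset (T j)) * pendentDistSum (T i) (w i) +
          #(pendentFinset (T i)) * pendentDistSum (T j) (w j) +
          2 * #(pendentFinset (T i)) * #(pendentFinset (T j)))) := by
  rw [two_mul_terminalWienerIndex, pendentFinset_eq T w hm hroot, sum_map, sum_sigma]
  refine sum_congr rfl fun i _ => ?_
  simp only [sum_map, sum_sigma, Function.Embedding.some_apply]
  rw [sum_comm, ← add_sum_erase _ _ (mem_univ i), sum_sum_dist_self T w (hc i)]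
  exact congr_arg _ <| sum_congr rfl fun j hj =>
    sum_sum_dist_of_ne T w (ne_of_mem_erase hj).symm (hc i) (hc j)

end joinTrees

/-- Let `T` be the tree obtained by joining a new vertex `w` to the roots `w i` of `m ≥ 2`
pairwise vertex-disjoint trees `T i`, where each `T i` is either the single vertex `w i` or
has root of degree at least `2`. If `l i` is the number of pendent vertices of `T i` and
`l = ∑ i, l i`, then
`TW(T) = ∑ i, (TW(T i) + (l - l i) · d'_{T i}(w i) - (l i)²) + l²`. -/
theorem terminal_wiener_index_joinTrees {ι : Type*} [Fintype ι] {V : ι → Type*}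
    [∀ i, Fintype (V i)] (T : ∀ i, SimpleGraph (V i)) [∀ i, DecidableRel (T i).Adj]
    (w : ∀ i, V i) (hT : ∀ i, (T i).IsTree) (hm : 2 ≤ Fintype.card ι)
    (hroot : ∀ i, Fintype.card (V i) = 1 ∨ 2 ≤ (T i).degree (w i))
    (l : ι → ℤ) (hl : ∀ i, l i = ((pendentFinset (T i)).card : ℤ)) :
    (terminalWienerIndex (joinTrees T w) : ℤ) =
      (∑ i, ((terminalWienerIndex (T i) : ℤ)
          + ((∑ j, l j) - l i) * (pendentDistSum (T i) (w i) : ℤ)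
          - (l i) ^ 2))
        + (∑ j, l j) ^ 2 := by
  classical
  have hnot_leaf : ∀ i, ((T i).neighborSet (w i)).ncard ≠ 1 := by
    intro i
    rw [← SimpleGraph.degree_eq_ncard_neighborSet]
    have := (T i).degree_lt_card_verts (w i)
    have := hroot i
    omega
  have key := congr_arg (Nat.cast : ℕ → ℤ) <|
    joinTrees.two_mul_terminalWienerIndex_eq T w (fun i => (hT i).connected) hm hnot_leaf
  push_cast [← hl] at key
  rw [sum_add_distrib, sum_sum_erase_cross_terms] at key
  simp only [sum_add_distrib, sum_sub_distrib, ← mul_sum] at key ⊢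
  linarith
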